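/- arXiv:1706.07509 — 6 statements merged into one kernel-verified Lean document; each statement's English description precedes it below -/
import Mathlib

section
/- Let α ∈ [0, π/2) be fixed, and for θ ∈ (−π/2, π/2) define f(θ) = (h/cos θ)·|b|·(1 − cos(π − (α + θ))) where h > 0 and |b| > 0 are constants. Then, parametrizing by t = h tan θ, the function t ↦ f(θ(t)) on (−∞, ∞) attains its unique global minimum at t = h tan α. -/
/-- The idealized OLIM one-point update function along a straight level set,
parametrized by `t = h tan θ`, i.e. `θ(t) = arctan (t/h)`. -/
noncomputable def updateFun (α h m t : ℝ) : ℝ :=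
  (h / Real.cos (Real.arctan (t / h))) * m *
    (1 - Real.cos (Real.pi - (α + Real.arctan (t / h))))

/-- The idealized update function attains its unique global minimum at
`t = h tan α`. -/
theorem updateFun_unique_global_min (α h m : ℝ)
    (hα0 : 0 ≤ α) (hα : α < Real.pi / 2) (hh : 0 < h) (hm : 0 < m) :
    ∀ t : ℝ, t ≠ h * Real.tan α →
      updateFun α h m (h * Real.tan α) < updateFun α h m t := by
  have hπ := Real.pi_pos
  intro t ht
  set θ := Real.arctan (t / h) with hθdef
  have hθmem : θ ∈ Set.Ioo (-(Real.pi/2)) (Real.pi/2) := Real.arctan_mem_Ioo (t / h)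
  have hcosθ : 0 < Real.cos θ := Real.cos_pos_of_mem_Ioo hθmem
  have hα2 : -(Real.pi/2) < α := by linarith
  have hcosα : 0 < Real.cos α := Real.cos_pos_of_mem_Ioo ⟨hα2, hα⟩
  have hargα : Real.arctan (h * Real.tan α / h) = α := by
    rw [mul_comm, mul_div_assoc, div_self hh.ne', mul_one, Real.arctan_tan hα2 hα]
  have hθne : θ ≠ α := by
    intro he
    apply ht
    have : Real.tan θ = t / h := Real.tan_arctan (t / h)
    rw [he] at this
    field_simp at this
    linarith
  -- cos (α - θ) < 1
  have hkey : Real.cos (α - θ) < 1 := by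
    rcases lt_or_eq_of_le (Real.cos_le_one (α - θ)) with h1 | h1
    · exact h1
    · exfalso
      have hb1 : -(2 * Real.pi) < α - θ := by
        have := hθmem.2; linarith
      have hb2 : α - θ < 2 * Real.pi := by
        have := hθmem.1; linarith
      have := (Real.cos_eq_one_iff_of_lt_of_lt hb1 hb2).mp h1
      exact hθne (by linarith)
  -- 2 cos α cos θ < 1 + cos (α + θ)
  have hsum : 2 * Real.cos α * Real.cos θ < 1 + Real.cos (α + θ) := by
    have e1 : Real.cos (α + θ) = Real.cos α * Real.cos θ - Real.sin α * Real.sin θ :=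
      Real.cos_add α θ
    have e2 : Real.cos (α - θ) = Real.cos α * Real.cos θ + Real.sin α * Real.sin θ :=
      Real.cos_sub α θ
    nlinarith
  unfold updateFun
  rw [hargα, ← hθdef, Real.cos_pi_sub, Real.cos_pi_sub]
  have LHS : h / Real.cos α * m * (1 - -Real.cos (α + α)) = 2 * h * m * Real.cos α := by
    rw [← two_mul, Real.cos_two_mul]
    field_simp
    ring
  rw [LHS]
  have : h / Real.cos θ * m * (2 * Real.cos α * Real.cos θ) <
      h / Real.cos θ * m * (1 + Real.cos (α + θ)) := by
    apply mul_lt_mul_of_pos_left hsum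
    positivity
  calc 2 * h * m * Real.cos α
      = h / Real.cos θ * m * (2 * Real.cos α * Real.cos θ) := by
        field_simp
    _ < h / Real.cos θ * m * (1 + Real.cos (α + θ)) := this
    _ = h / Real.cos θ * m * (1 - -Real.cos (α + θ)) := by ring
end

section
/- Let b: ℝ² → ℝ², x₀, v, f be as follows: b is C³, b₀ = b(x₀) ≠ 0, ‖v‖ = 1, and f(t) = ‖b(x₀ + tv)‖ − b(x₀ + tv)·v. Then f''(0) = (‖Jv‖²‖b₀‖² − (b₀ᵀJv)²)/‖b₀‖³ + (b₀/‖b₀‖ − v)ᵀ H, where J is the Jacobian of b at x₀ and H is the vector with components vᵀ(∇∇bᵢ(x₀))v for i = 1, 2. -/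
/-!
Along the line, `f = ‖c‖ - ⟪c, v⟫` with `c t = b (x₀ + t • v)`, so `c' 0 = J v` and
`c'' 0 = D²b(x₀)(v, v)`. Differentiating `‖c‖' = ⟪c, c'⟫ / ‖c‖` once more (legitimate near `0`,
where `c ≠ 0`) gives `(‖c'‖² ‖c‖² - ⟪c, c'⟫²) / ‖c‖³ + ⟪c / ‖c‖, c''⟫`, and the linear term
contributes `-⟪v, c''⟫`.
-/

open scoped RealInnerProductSpace Topology

section NormAlongCurve

variable {E : Type*} [NormedAddCommGroup E] [InnerProductSpace ℝ E]

theorem HasDerivAt.norm_of_ne_zero {c : ℝ → E} {c' : E} {t : ℝ}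
    (hc : HasDerivAt c c' t) (h0 : c t ≠ 0) :
    HasDerivAt (‖c ·‖) (⟪c t, c'⟫ / ‖c t‖) t := by
  have hsq : ‖c t‖ ^ 2 ≠ 0 := pow_ne_zero 2 (norm_ne_zero_iff.2 h0)
  have hsqrt := hc.norm_sq.sqrt hsq
  simp only [Real.sqrt_sq (norm_nonneg _)] at hsqrt
  convert hsqrt using 1
  field_simp

theorem deriv_deriv_norm_sub_inner {c c' : ℝ → E} {c'' w : E} {t : ℝ}
    (hc : ∀ᶠ s in 𝓝 t, HasDerivAt c (c' s) s) (hc' : HasDerivAt c' c'' t) (h0 : c t ≠ 0) :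
    deriv (deriv fun s => ‖c s‖ - ⟪c s, w⟫) t =
      (‖c' t‖ ^ 2 * ‖c t‖ ^ 2 - ⟪c t, c' t⟫ ^ 2) / ‖c t‖ ^ 3 + ⟪‖c t‖⁻¹ • c t - w, c''⟫ := by
  have hne : ∀ᶠ s in 𝓝 t, c s ≠ 0 := hc.self_of_nhds.continuousAt.eventually_ne h0
  have hfirst : deriv (fun s => ‖c s‖ - ⟪c s, w⟫) =ᶠ[𝓝 t]
      fun s => ⟪c s, c' s⟫ / ‖c s‖ - ⟪c' s, w⟫ := by
    filter_upwards [hc, hne] with s hcs hs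
    exact ((hcs.norm_of_ne_zero hs).sub (hcs.inner ℝ (hasDerivAt_const s w))).deriv.trans
      (by rw [inner_zero_right, zero_add])
  have hct := hc.self_of_nhds
  have hsecond : HasDerivAt (fun s => ⟪c s, c' s⟫ / ‖c s‖ - ⟪c' s, w⟫) _ t :=
    ((hct.inner ℝ hc').div (hct.norm_of_ne_zero h0) (norm_ne_zero_iff.2 h0)).sub
      (hc'.inner ℝ (hasDerivAt_const t w))
  rw [hfirst.deriv_eq, hsecond.deriv]
  rw [inner_sub_left, real_inner_smul_left, real_inner_self_eq_norm_sq, inner_zero_right,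
    zero_add, real_inner_comm c'' w]
  field_simp
  ring

end NormAlongCurve

section AlongLine

variable {E F : Type*} [NormedAddCommGroup E] [NormedSpace ℝ E]
  [NormedAddCommGroup F] [NormedSpace ℝ F]

theorem DifferentiableAt.hasDerivAt_comp_line {g : E → F} {x v : E} {t : ℝ}
    (hg : DifferentiableAt ℝ g (x + t • v)) :
    HasDerivAt (fun s : ℝ => g (x + s • v)) (fderiv ℝ g (x + t • v) v) t :=
  hg.hasFDerivAt.comp_hasDerivAt t (by simpa using ((hasDerivAt_id t).smul_const v).const_add x)

end AlongLine

theorem lineIntegrand_second_deriv_at_zero_general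
    (b : EuclideanSpace ℝ (Fin 2) → EuclideanSpace ℝ (Fin 2))
    (hb : ContDiff ℝ 3 b) (x₀ v : EuclideanSpace ℝ (Fin 2))
    (hb0 : b x₀ ≠ 0) :
    deriv (deriv (fun t : ℝ => ‖b (x₀ + t • v)‖ - ⟪b (x₀ + t • v), v⟫)) 0 =
      (‖(fderiv ℝ b x₀) v‖ ^ 2 * ‖b x₀‖ ^ 2 - (⟪b x₀, (fderiv ℝ b x₀) v⟫) ^ 2) /
        ‖b x₀‖ ^ 3 +
      ⟪(‖b x₀‖)⁻¹ • b x₀ - v, ((fderiv ℝ (fderiv ℝ b) x₀) v) v⟫ := by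
  have hb1 : Differentiable ℝ b := hb.differentiable (by norm_num)
  have hb2 : Differentiable ℝ (fderiv ℝ b) :=
    (hb.fderiv_right (m := 2) (by norm_num)).differentiable (by norm_num)
  have hJ := (hb2 (x₀ + (0 : ℝ) • v)).hasDerivAt_comp_line
  simpa using deriv_deriv_norm_sub_inner (w := v) (t := 0)
    (Filter.Eventually.of_forall fun s => (hb1 (x₀ + s • v)).hasDerivAt_comp_line)
    (hJ.clm_apply (hasDerivAt_const 0 v)) (by simpa using hb0)

/-- Second derivative at `0` of the geometric-action integrand along a line
segment (Eq. (d2)). -/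
theorem lineIntegrand_second_deriv_at_zero
    (b : EuclideanSpace ℝ (Fin 2) → EuclideanSpace ℝ (Fin 2))
    (hb : ContDiff ℝ 3 b) (x₀ v : EuclideanSpace ℝ (Fin 2))
    (hb0 : b x₀ ≠ 0) (hv : ‖v‖ = 1) :
    deriv (deriv (fun t : ℝ => ‖b (x₀ + t • v)‖ - ⟪b (x₀ + t • v), v⟫)) 0 =
      (‖(fderiv ℝ b x₀) v‖ ^ 2 * ‖b x₀‖ ^ 2 - (⟪b x₀, (fderiv ℝ b x₀) v⟫) ^ 2) /
        ‖b x₀‖ ^ 3 +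
      ⟪(‖b x₀‖)⁻¹ • b x₀ - v, ((fderiv ℝ (fderiv ℝ b) x₀) v) v⟫ :=
  lineIntegrand_second_deriv_at_zero_general b hb x₀ v hb0
end

section
/- Let b, x₀, x₁, x ∈ ℝ², u₀, u₁ ∈ ℝ, with x₁ = 0 and x₀, x linearly independent. Define f(s) = s·u₀ + (1−s)·u₁ + ‖b‖·‖x − s·x₀‖ − b·(x − s·x₀). Then f is smooth on the set where x − s·x₀ ≠ 0, and f is convex on ℝ whenever ‖b‖ > 0 (in the sense that at any interior critical point s* with x − s*x₀ ≠ 0, f''(s*) ≥ 0). -/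
open scoped RealInnerProductSpace

/-- The OLIM-R triangle-update objective (with `x₁` at the origin). -/
noncomputable def olimRObj (b x₀ x : EuclideanSpace ℝ (Fin 2)) (u₀ u₁ : ℝ)
    (s : ℝ) : ℝ :=
  s * u₀ + (1 - s) * u₁ + ‖b‖ * ‖x - s • x₀‖ - ⟪b, x - s • x₀⟫

/-- A monotone function has nonnegative derivative. -/
lemma monotone_deriv_nonneg' {g : ℝ → ℝ} (hg : Monotone g) (s : ℝ) :
    0 ≤ deriv g s := by
  by_cases hd : DifferentiableAt ℝ g s
  · have h := hd.hasDerivAt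
    rw [hasDerivAt_iff_tendsto_slope] at h
    have h2 : Filter.Tendsto (slope g s) (nhdsWithin s (Set.Ioi s)) (nhds (deriv g s)) :=
      h.mono_left (nhdsWithin_mono s (fun y hy => ne_of_gt hy))
    refine ge_of_tendsto h2 ?_
    filter_upwards [self_mem_nhdsWithin] with y hy
    have : (0:ℝ) < y - s := sub_pos.mpr hy
    rw [slope_def_field]
    exact div_nonneg (sub_nonneg.mpr (hg (le_of_lt hy))) (le_of_lt this)
  · simp [deriv_zero_of_not_differentiableAt hd]

lemma convexOn_affine (c d : ℝ) : ConvexOn ℝ Set.univ (fun s : ℝ => c * s + d) := by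
  refine ⟨convex_univ, fun a _ b _ ta tb hta htb hab => ?_⟩
  simp only [smul_eq_mul]
  apply le_of_eq
  linear_combination (-d) * hab

/-- The OLIM-R objective is smooth where `x - s x₀ ≠ 0`, and at any interior
critical point its second derivative is nonnegative (convexity). -/
theorem olimRObj_smooth_and_convex (b x₀ x : EuclideanSpace ℝ (Fin 2))
    (u₀ u₁ : ℝ) (hind : LinearIndependent ℝ ![x₀, x]) :
    (∀ s : ℝ, x - s • x₀ ≠ 0 →
      ContDiffAt ℝ (⊤ : ℕ∞) (olimRObj b x₀ x u₀ u₁) s) ∧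
    (‖b‖ > 0 → ∀ s : ℝ, x - s • x₀ ≠ 0 →
      deriv (olimRObj b x₀ x u₀ u₁) s = 0 →
      0 ≤ deriv (deriv (olimRObj b x₀ x u₀ u₁)) s) := by
  -- `x - s • x₀ ≠ 0` always holds, by linear independence
  rw [linearIndependent_fin2] at hind
  simp only [Matrix.cons_val_one, Matrix.head_cons, Matrix.cons_val_zero] at hind
  obtain ⟨hx_ne, hax⟩ := hind
  have h0 : ∀ s : ℝ, x - s • x₀ ≠ 0 := by
    intro s h
    rw [sub_eq_zero] at h
    rcases eq_or_ne s 0 with rfl | hs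
    · simp at h; exact hx_ne h
    · exact hax s⁻¹ (by rw [h, smul_smul, inv_mul_cancel₀ hs, one_smul])
  have hy : ContDiff ℝ (⊤ : ℕ∞) (fun s : ℝ => x - s • x₀) :=
    contDiff_const.sub (contDiff_id.smul contDiff_const)
  -- smoothness at every point
  have hsm : ∀ s : ℝ, ContDiffAt ℝ (⊤ : ℕ∞) (olimRObj b x₀ x u₀ u₁) s := by
    intro s
    have h1 : ContDiffAt ℝ (⊤ : ℕ∞) (fun s : ℝ => s * u₀ + (1 - s) * u₁) s :=
      (contDiffAt_id.mul contDiffAt_const).add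
        ((contDiffAt_const.sub contDiffAt_id).mul contDiffAt_const)
    have h2 : ContDiffAt ℝ (⊤ : ℕ∞) (fun s : ℝ => ‖b‖ * ‖x - s • x₀‖) s :=
      contDiffAt_const.mul ((hy.contDiffAt).norm ℝ (h0 s))
    have h3 : ContDiffAt ℝ (⊤ : ℕ∞) (fun s : ℝ => ⟪b, x - s • x₀⟫) s :=
      ContDiffAt.inner ℝ contDiffAt_const hy.contDiffAt
    exact (h1.add h2).sub h3
  refine ⟨fun s _ => hsm s, fun _ s _ _ => ?_⟩
  -- convexity of the objective
  set f := olimRObj b x₀ x u₀ u₁ with hf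
  have hc : ContDiff ℝ (⊤ : ℕ∞) f := contDiff_iff_contDiffAt.mpr hsm
  -- affine map s ↦ x - s • x₀
  let A : ℝ →ᵃ[ℝ] EuclideanSpace ℝ (Fin 2) :=
    { toFun := fun s => x - s • x₀
      linear := -((LinearMap.id : ℝ →ₗ[ℝ] ℝ).smulRight x₀)
      map_vadd' := by
        intro p v
        simp only [LinearMap.neg_apply, LinearMap.smulRight_apply, LinearMap.id_coe, id_eq]
        rw [vadd_eq_add, vadd_eq_add, add_smul]
        abel }
  have hg : ConvexOn ℝ Set.univ (fun s : ℝ => ‖x - s • x₀‖) := by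
    have := (convexOn_univ_norm (E := EuclideanSpace ℝ (Fin 2))).comp_affineMap A
    exact this
  have haff : ConvexOn ℝ Set.univ
      (fun s : ℝ => (u₀ - u₁ + ⟪b, x₀⟫) * s + (u₁ - ⟪b, x⟫)) :=
    convexOn_affine _ _
  have hF : ConvexOn ℝ Set.univ f := by
    have hsum := (hg.smul (norm_nonneg b)).add haff
    have heq : f = (fun s : ℝ => ‖b‖ • ‖x - s • x₀‖) +
        fun s : ℝ => (u₀ - u₁ + ⟪b, x₀⟫) * s + (u₁ - ⟪b, x⟫) := by
      funext s
      simp only [hf, olimRObj, Pi.add_apply, smul_eq_mul, inner_sub_right,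
        real_inner_smul_right]
      ring
    rw [heq]
    exact hsum
  -- derivative is monotone, hence second derivative nonneg
  have hdm : MonotoneOn (deriv f) Set.univ :=
    hF.monotoneOn_deriv fun y _ => (hc.differentiable (by simp)).differentiableAt
  exact monotone_deriv_nonneg' (monotoneOn_univ.mp hdm) s
end

section
/- Fix α ∈ (0, π), β ∈ ℝ, U_ξ ∈ ℝ, r > 0 (playing the role of ‖x‖), and m > 0 (playing the role of ‖b‖), and define F(γ) = r·(U_ξ·cos α + [m·(1 − cos γ)/sin(γ − β) − U_ξ·cos(γ − β)/sin(γ − β)]·sin α) for γ ∈ (β, β + π). Then F'(γ) = 0 if and only if m·cos(γ − β) = U_ξ + m·cos β, and at any such critical point γ*, F''(γ*) = r·sin α·m/sin(γ* − β) > 0. -/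
/-- The OLIM-R update objective in the angle variable `γ` (Eq. (Fgamma)). -/
noncomputable def angleObj (r m Uξ α β γ : ℝ) : ℝ :=
  r * (Uξ * Real.cos α +
    (m * (1 - Real.cos γ) / Real.sin (γ - β) -
      Uξ * Real.cos (γ - β) / Real.sin (γ - β)) * Real.sin α)

/-!
Writing `F = r U cos α + r sin α · N / D` with `N(γ) = m (1 - cos γ) - U cos (γ - β)` and
`D(γ) = sin (γ - β)`, the addition formula `cos β = cos γ cos (γ - β) + sin γ sin (γ - β)`
collapses the quotient rule to `F' = r sin α (U + m cos β - m cos (γ - β)) / sin² (γ - β)`.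
Its numerator vanishes exactly at the critical points, and a quotient whose numerator vanishes
at a point has derivative `g' / h` there, giving `F'' = r sin α · m sin (γ - β) / sin² (γ - β)`.
-/

open Real Topology

theorem HasDerivAt.div_of_eq_zero {𝕜 : Type*} [NontriviallyNormedField 𝕜] {g h : 𝕜 → 𝕜}
    {g' h' x : 𝕜} (hg : HasDerivAt g g' x) (hh : HasDerivAt h h' x) (hx : h x ≠ 0) (hgx : g x = 0) :
    HasDerivAt (fun y => g y / h y) (g' / h x) x :=
  (hg.div hh hx).congr_deriv (by field_simp; rw [hgx]; ring)

noncomputable def angleObjDeriv (r m Uξ α β γ : ℝ) : ℝ :=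
  r * sin α * (Uξ + m * cos β - m * cos (γ - β)) / sin (γ - β) ^ 2

section

variable (r m Uξ α β : ℝ) {γ : ℝ}

theorem hasDerivAt_angleObj (hs : sin (γ - β) ≠ 0) :
    HasDerivAt (angleObj r m Uξ α β) (angleObjDeriv r m Uξ α β γ) γ := by
  have hN : HasDerivAt (fun x => m * (1 - cos x) - Uξ * cos (x - β))
      (m * sin γ + Uξ * sin (γ - β)) γ :=
    (((hasDerivAt_cos γ).const_sub 1).const_mul m).sub
      (((hasDerivAt_cos (γ - β)).comp_sub_const γ β).const_mul Uξ) |>.congr_deriv (by ring)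
  have hF := ((hN.div ((hasDerivAt_sin (γ - β)).comp_sub_const γ β) hs).const_mul
    (r * sin α)).const_add (r * Uξ * cos α)
  have hfun : angleObj r m Uξ α β = fun x =>
      r * Uξ * cos α + r * sin α * ((m * (1 - cos x) - Uξ * cos (x - β)) / sin (x - β)) := by
    funext x
    unfold angleObj
    ring
  have hcos_β : cos β = cos γ * cos (γ - β) + sin γ * sin (γ - β) := by
    rw [← cos_sub, sub_sub_cancel]
  rw [hfun]
  refine hF.congr_deriv ?_
  rw [angleObjDeriv, mul_div_assoc]
  congr 2
  linear_combination Uξ * sin_sq_add_cos_sq (γ - β) - m * hcos_β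

theorem deriv_angleObj_eventuallyEq (hs : sin (γ - β) ≠ 0) :
    deriv (angleObj r m Uξ α β) =ᶠ[𝓝 γ] angleObjDeriv r m Uξ α β := by
  have hopen : IsOpen {x : ℝ | sin (x - β) ≠ 0} :=
    isOpen_ne.preimage (by fun_prop)
  filter_upwards [hopen.mem_nhds hs] with x hx
  exact (hasDerivAt_angleObj r m Uξ α β hx).deriv

theorem angleObjDeriv_eq_zero_iff (hrα : r * sin α ≠ 0) (hs : sin (γ - β) ≠ 0) :
    angleObjDeriv r m Uξ α β γ = 0 ↔ m * cos (γ - β) = Uξ + m * cos β := by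
  rw [angleObjDeriv, div_eq_zero_iff, or_iff_left (pow_ne_zero 2 hs), mul_eq_zero,
    or_iff_right hrα, sub_eq_zero, eq_comm]

theorem hasDerivAt_angleObjDeriv_of_eq (hs : sin (γ - β) ≠ 0)
    (hcrit : m * cos (γ - β) = Uξ + m * cos β) :
    HasDerivAt (angleObjDeriv r m Uξ α β) (r * sin α * m / sin (γ - β)) γ := by
  have hnum : HasDerivAt (fun x => r * sin α * (Uξ + m * cos β - m * cos (x - β)))
      (r * sin α * (m * sin (γ - β))) γ :=
    ((((hasDerivAt_cos (γ - β)).comp_sub_const γ β).const_mul m).const_sub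
      (Uξ + m * cos β)).const_mul (r * sin α) |>.congr_deriv (by ring)
  have hden := ((hasDerivAt_sin (γ - β)).comp_sub_const γ β).pow 2
  refine hnum.div_of_eq_zero hden (pow_ne_zero 2 hs) (by rw [hcrit, sub_self, mul_zero])
    |>.congr_deriv ?_
  simp only [Pi.pow_apply]
  field_simp

end

/-- Critical points of `F` on `(β, β+π)` are exactly solutions of
`m cos(γ−β) = U_ξ + m cos β`, and at such points
`F''(γ) = r sin α · m / sin(γ−β) > 0`. -/
theorem angleObj_critical_point (r m Uξ α β : ℝ)
    (hα0 : 0 < α) (hαπ : α < Real.pi) (hr : 0 < r) (hm : 0 < m) :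
    ∀ γ ∈ Set.Ioo β (β + Real.pi),
      (deriv (angleObj r m Uξ α β) γ = 0 ↔
        m * Real.cos (γ - β) = Uξ + m * Real.cos β) ∧
      (deriv (angleObj r m Uξ α β) γ = 0 →
        deriv (deriv (angleObj r m Uξ α β)) γ =
          r * Real.sin α * m / Real.sin (γ - β) ∧
        0 < r * Real.sin α * m / Real.sin (γ - β)) := by
  rintro γ ⟨hβγ, hγπ⟩
  have hs : 0 < sin (γ - β) := sin_pos_of_pos_of_lt_pi (by linarith) (by linarith)
  have hα : 0 < sin α := sin_pos_of_pos_of_lt_pi hα0 hαπ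
  have hcrit_iff : deriv (angleObj r m Uξ α β) γ = 0 ↔ m * cos (γ - β) = Uξ + m * cos β := by
    rw [(hasDerivAt_angleObj r m Uξ α β hs.ne').deriv]
    exact angleObjDeriv_eq_zero_iff r m Uξ α β (by positivity) hs.ne'
  refine ⟨hcrit_iff, fun hcrit => ⟨?_, by positivity⟩⟩
  rw [(deriv_angleObj_eventuallyEq r m Uξ α β hs.ne').deriv_eq]
  exact (hasDerivAt_angleObjDeriv_of_eq r m Uξ α β hs.ne' (hcrit_iff.mp hcrit)).deriv
end

section
/- Let A ∈ ℝ^{2×2} be a matrix whose eigenvalues have negative real parts and which satisfies (A₁₁ + A₂₂)² + (A₂₁ − A₁₂)² ≠ 0. Define α = (A₁₁+A₂₂)²/((A₁₁+A₂₂)² + (A₂₁−A₁₂)²), β = (A₂₁−A₁₂)(A₁₁+A₂₂)/((A₁₁+A₂₂)² + (A₂₁−A₁₂)²), and 𝒜 = −(αA₁₁+βA₂₁), ℬ = −(αA₁₂+βA₂₂), 𝒞 = −(αA₂₂−βA₁₂). Then the function U(x) = xᵀQx with the symmetric matrix Q = [[𝒜, ℬ],[ℬ, 𝒞]] satisfies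 the Hamilton–Jacobi equation ‖∇U(x)‖² + 2(Ax)·∇U(x) = 0 for all x ∈ ℝ². -/
/-- For a stable 2×2 matrix `A`, the explicit quadratic form (Eq. (lin_approx))
solves the quasi-potential Hamilton–Jacobi equation `‖∇U‖² + 2(Ax)·∇U = 0`. -/
theorem linear_sde_quasipotential (A : Matrix (Fin 2) (Fin 2) ℝ)
    (hstab : ∀ μ ∈ spectrum ℂ (A.map (Complex.ofReal)), μ.re < 0)
    (hA : (A 0 0 + A 1 1) ^ 2 + (A 1 0 - A 0 1) ^ 2 ≠ 0)
    (al be 𝒜 ℬ 𝒞 : ℝ)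
    (hal : al = (A 0 0 + A 1 1) ^ 2 /
      ((A 0 0 + A 1 1) ^ 2 + (A 1 0 - A 0 1) ^ 2))
    (hbe : be = (A 1 0 - A 0 1) * (A 0 0 + A 1 1) /
      ((A 0 0 + A 1 1) ^ 2 + (A 1 0 - A 0 1) ^ 2))
    (h𝒜 : 𝒜 = -(al * A 0 0 + be * A 1 0))
    (hℬ : ℬ = -(al * A 0 1 + be * A 1 1))
    (h𝒞 : 𝒞 = -(al * A 1 1 - be * A 0 1)) :
    ∀ x : Fin 2 → ℝ,
      (2 * 𝒜 * x 0 + 2 * ℬ * x 1) ^ 2 + (2 * ℬ * x 0 + 2 * 𝒞 * x 1) ^ 2 +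
        2 * ((A.mulVec x 0) * (2 * 𝒜 * x 0 + 2 * ℬ * x 1) +
          (A.mulVec x 1) * (2 * ℬ * x 0 + 2 * 𝒞 * x 1)) = 0 := by
  intro x
  have hmv0 : A.mulVec x 0 = A 0 0 * x 0 + A 0 1 * x 1 := by
    simp [Matrix.mulVec, dotProduct, Fin.sum_univ_two]
  have hmv1 : A.mulVec x 1 = A 1 0 * x 0 + A 1 1 * x 1 := by
    simp [Matrix.mulVec, dotProduct, Fin.sum_univ_two]
  subst hal hbe h𝒜 hℬ h𝒞
  rw [hmv0, hmv1]
  field_simp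
  ring
end

section
/- Let b ∈ ℝ² with b = (‖b‖cos β, −‖b‖sin β), ‖b‖ > 0, and suppose γ ∈ (β, β + π) satisfies ‖b‖cos(γ − β) = U_ξ + ‖b‖cos β for a given U_ξ ∈ ℝ. Define U_η = −b_η + ‖b‖sin(γ − β) where b_η = −‖b‖sin β. Then U_η = ‖b‖sin β + √(‖b‖²sin²β − 2‖b‖ U_ξ cos β − U_ξ²), and the vector (U_ξ, U_η) satisfies ‖(U_ξ, U_η)‖² + 2·b·(U_ξ, U_η) = 0. -/
/-- At the minimizing angle `γ` of the OLIM-R objective, the gradient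
`(U_ξ, U_η)` with `U_η = −b_η + ‖b‖ sin(γ−β)` admits the explicit square-root
expression and solves the quasi-potential Hamilton–Jacobi equation. -/
theorem minimizing_angle_gradient (b : EuclideanSpace ℝ (Fin 2)) (β Uξ γ : ℝ)
    (hb : 0 < ‖b‖) (hb0 : b 0 = ‖b‖ * Real.cos β)
    (hb1 : b 1 = -‖b‖ * Real.sin β)
    (hγ : γ ∈ Set.Ioo β (β + Real.pi))
    (hcrit : ‖b‖ * Real.cos (γ - β) = Uξ + ‖b‖ * Real.cos β) :
    ‖b‖ * Real.sin β + ‖b‖ * Real.sin (γ - β) =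
      ‖b‖ * Real.sin β +
        Real.sqrt (‖b‖ ^ 2 * Real.sin β ^ 2 - 2 * ‖b‖ * Uξ * Real.cos β - Uξ ^ 2) ∧
    Uξ ^ 2 + (‖b‖ * Real.sin β + ‖b‖ * Real.sin (γ - β)) ^ 2 +
      2 * ((‖b‖ * Real.cos β) * Uξ +
        (-‖b‖ * Real.sin β) * (‖b‖ * Real.sin β + ‖b‖ * Real.sin (γ - β))) = 0 := by
  obtain ⟨h1, h2⟩ := hγ
  have hs : 0 ≤ Real.sin (γ - β) :=
    Real.sin_nonneg_of_nonneg_of_le_pi (by linarith) (by linarith)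
  have hpy := Real.sin_sq_add_cos_sq (γ - β)
  have hpyβ := Real.sin_sq_add_cos_sq β
  have key : ‖b‖ ^ 2 * Real.sin (γ - β) ^ 2 =
      ‖b‖ ^ 2 * Real.sin β ^ 2 - 2 * ‖b‖ * Uξ * Real.cos β - Uξ ^ 2 := by
    have hc2 : (‖b‖ * Real.cos (γ - β)) ^ 2 = (Uξ + ‖b‖ * Real.cos β) ^ 2 := by
      rw [hcrit]
    nlinarith [hc2, hpy, hpyβ]
  constructor
  · rw [← key]
    have : ‖b‖ ^ 2 * Real.sin (γ - β) ^ 2 = (‖b‖ * Real.sin (γ - β)) ^ 2 := by ring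
    rw [this, Real.sqrt_sq (by positivity)]
  · nlinarith [key]
end
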